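/- arXiv:1809.07997 — 2 statements merged into one kernel-verified Lean document; each statement's English description precedes it below -/
import Mathlib

section
/- Let Γ be a graph product graph of finite cyclic groups that is a disjoint union of two induced subgraphs Γ₁ and Γ₂ (no edges between them). If Cay(G(Γ₁)) and Cay(G(Γ₂)) are planar, then Cay(G(Γ)) is planar. -/
/-- `G` contains a subdivision of `H` as a subgraph: there are branch vertices (an injection
`f` of the vertices of `H` into `G`) and, for each edge of `H`, a path in `G` between the
corresponding branch vertices, such that these paths are internally disjoint from each other
and from the set of branch vertices. -/
def ContainsSubdivision {V W : Type} (G : SimpleGraph V) (H : SimpleGraph W) : Prop :=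
  ∃ (f : W ↪ V) (p : ∀ {a b : W}, H.Adj a b → G.Walk (f a) (f b)),
    (∀ {a b : W} (h : H.Adj a b), (p h).IsPath) ∧
    (∀ {a b : W} (h : H.Adj a b), p h.symm = (p h).reverse) ∧
    (∀ {a b : W} (h : H.Adj a b) (c : W), f c ∈ (p h).support → c = a ∨ c = b) ∧
    (∀ {a b c d : W} (h₁ : H.Adj a b) (h₂ : H.Adj c d), s(a, b) ≠ s(c, d) →
      ∀ x, x ∈ (p h₁).support → x ∈ (p h₂).support → ∃ w : W, x = f w)

/-- Planarity, via the Kuratowski (Dirac–Schuster in the infinite case) characterization: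
a simple graph is planar iff it contains no subdivision of `K₅` or `K₃,₃` as a subgraph. -/
def IsPlanar {V : Type} (G : SimpleGraph V) : Prop :=
  ¬ ContainsSubdivision G (SimpleGraph.completeGraph (Fin 5)) ∧
  ¬ ContainsSubdivision G (completeBipartiteGraph (Fin 3) (Fin 3))

/-- The (simple, undirected) Cayley graph of a group w.r.t. a generating set. -/
def cayleyGraph (G : Type) [Group G] (S : Set G) : SimpleGraph G :=
  SimpleGraph.fromRel (fun g h => ∃ s ∈ S, h = g * s)

/-- The (simple, undirected) Cayley graph of an additive group w.r.t. a generating set. -/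
def cayleyGraphAdd (G : Type) [AddGroup G] (S : Set G) : SimpleGraph G :=
  SimpleGraph.fromRel (fun g h => ∃ s ∈ S, h = g + s)

open scoped commutatorElement in
/-- The relations of the graph product of finite cyclic groups over the labelled graph `Γ`:
the vertex group at `v` is cyclic of order `o v`, and generators of adjacent vertex groups
commute. -/
def graphProductRels {V : Type} (Γ : SimpleGraph V) (o : V → ℕ) : Set (FreeGroup V) :=
  {r | (∃ v, r = FreeGroup.of v ^ o v) ∨
       (∃ v w, Γ.Adj v w ∧ r = ⁅FreeGroup.of v, FreeGroup.of w⁆)}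

/-- The graph product of finite cyclic groups over the labelled graph `Γ`. -/
def GraphProduct {V : Type} (Γ : SimpleGraph V) (o : V → ℕ) : Type :=
  PresentedGroup (graphProductRels Γ o)

instance {V : Type} (Γ : SimpleGraph V) (o : V → ℕ) : Group (GraphProduct Γ o) :=
  inferInstanceAs (Group (PresentedGroup (graphProductRels Γ o)))

/-- The Cayley graph of the graph product `G(Γ)` with respect to the standard generators. -/
def cayleyGraphGP {V : Type} (Γ : SimpleGraph V) (o : V → ℕ) : SimpleGraph (GraphProduct Γ o) :=
  cayleyGraph (GraphProduct Γ o) (Set.range (PresentedGroup.of : V → GraphProduct Γ o))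

/-- The cycle graph `C_k` on `ZMod k` (`k ≥ 3`). -/
def cycleG (k : ℕ) : SimpleGraph (ZMod k) :=
  SimpleGraph.fromRel (fun i j => j = i + 1)

/-- A group is finitely presented. -/
def IsFinitelyPresented (G : Type) [Group G] : Prop :=
  ∃ (n : ℕ) (rels : Set (FreeGroup (Fin n))), rels.Finite ∧ Nonempty (G ≃* PresentedGroup rels)

/-!
The graph product over a disjoint union of graphs is the free product of the graph products over
the parts, and this isomorphism carries standard generators to standard generators; so it suffices
to show that free products `∗ᵢ Mᵢ` preserve planarity of Cayley graphs.

In the Cayley graph of a free product every edge joins `x` to `x * m` with `m` in a single factor,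
and the left cosets `u Mᵢ` of the factors behave like the blocks of the graph: if the reduced word
of `u⁻¹ v` is a letter `c` followed by a nonempty word, then `u c` is a cut vertex separating `u`
from `v`. In a subdivision of `K₅` or `K₃,₃` any two branch vertices are joined by two internally
disjoint paths, so no vertex separates them, and hence any two branch vertices lie in a common
coset of a factor. Three points that pairwise lie in such cosets lie in one coset (a reduced word
of two letters lies in no factor), so all branch vertices lie in one coset `u Mᵢ`. A path between
two points of this coset never leaves it, since it would have to come back through the cut vertex
at which it left. So the whole subdivision lies in `u Mᵢ`, a copy of the Cayley graph of `Mᵢ`.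
-/

theorem Set.mem_preimage_singleton_self {α β : Type*} (f : α → β) (a : α) : a ∈ f ⁻¹' {f a} :=
  Set.mem_singleton _

theorem Subgroup.inv_mul_mem_comm {G : Type*} [Group G] {s : Subgroup G} {x y : G} :
    x⁻¹ * y ∈ s ↔ y⁻¹ * x ∈ s := by
  rw [← s.inv_mem_iff, mul_inv_rev, inv_inv]

theorem Subgroup.inv_mul_mem_trans {G : Type*} [Group G] {s : Subgroup G} {x y z : G}
    (hxy : x⁻¹ * y ∈ s) (hyz : y⁻¹ * z ∈ s) : x⁻¹ * z ∈ s := by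
  simpa [mul_assoc] using s.mul_mem hxy hyz

namespace SimpleGraph

variable {V V' W : Type*} {G : SimpleGraph V} {G' : SimpleGraph V'} {H : SimpleGraph W}

structure Subdivision (G : SimpleGraph V) (H : SimpleGraph W) where
  branch : W ↪ V
  path : ∀ {a b : W}, H.Adj a b → G.Walk (branch a) (branch b)
  isPath : ∀ {a b : W} (h : H.Adj a b), (path h).IsPath
  path_symm : ∀ {a b : W} (h : H.Adj a b), path h.symm = (path h).reverse
  eq_or_eq_of_branch_mem_support :
    ∀ {a b : W} (h : H.Adj a b) (c : W), branch c ∈ (path h).support → c = a ∨ c = b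
  exists_eq_branch_of_mem_support :
    ∀ {a b c d : W} (h₁ : H.Adj a b) (h₂ : H.Adj c d), s(a, b) ≠ s(c, d) →
      ∀ x, x ∈ (path h₁).support → x ∈ (path h₂).support → ∃ w, x = branch w

namespace Subdivision

variable (s : G.Subdivision H)

def map (φ : G ↪g G') : G'.Subdivision H where
  branch := s.branch.trans φ.toEmbedding
  path h := (s.path h).map φ.toHom
  isPath h := (s.isPath h).map φ.injective
  path_symm h := by
    change (s.path h.symm).map φ.toHom = ((s.path h).map φ.toHom).reverse
    rw [s.path_symm, Walk.reverse_map]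
  eq_or_eq_of_branch_mem_support h c hc := by
    change φ (s.branch c) ∈ ((s.path h).map φ.toHom).support at hc
    rw [Walk.support_map, List.mem_map] at hc
    obtain ⟨x, hx, hxc⟩ := hc
    exact s.eq_or_eq_of_branch_mem_support h c (φ.injective hxc ▸ hx)
  exists_eq_branch_of_mem_support h₁ h₂ hne x hx₁ hx₂ := by
    change x ∈ ((s.path _).map φ.toHom).support at hx₁ hx₂
    rw [Walk.support_map, List.mem_map] at hx₁ hx₂
    obtain ⟨y₁, hy₁, rfl⟩ := hx₁
    obtain ⟨y₂, hy₂, hy⟩ := hx₂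
    obtain ⟨w, rfl⟩ := s.exists_eq_branch_of_mem_support h₁ h₂ hne y₁ hy₁ (φ.injective hy ▸ hy₂)
    exact ⟨w, rfl⟩

def induce (S : Set V) (hbranch : ∀ w, s.branch w ∈ S)
    (hpath : ∀ {a b : W} (h : H.Adj a b), ∀ x ∈ (s.path h).support, x ∈ S) :
    (G.induce S).Subdivision H where
  branch := ⟨fun w => ⟨s.branch w, hbranch w⟩,
    fun _ _ h => s.branch.injective (congrArg Subtype.val h)⟩
  path h := (s.path h).induce S (hpath h)
  isPath h := Walk.IsPath.of_map (f := (Embedding.induce S).toHom) <| by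
    rw [Walk.map_induce]
    exact s.isPath h
  path_symm h := Walk.map_injective_of_injective (f := (Embedding.induce S).toHom)
    Subtype.val_injective _ _ <| by
      simp only [← Walk.reverse_map, Walk.map_induce]
      exact s.path_symm h
  eq_or_eq_of_branch_mem_support h c hc := by
    rw [Walk.support_induce, List.mem_attachWith] at hc
    exact s.eq_or_eq_of_branch_mem_support h c hc
  exists_eq_branch_of_mem_support h₁ h₂ hne x hx₁ hx₂ := by
    rw [Walk.support_induce, List.mem_attachWith] at hx₁ hx₂
    obtain ⟨w, hw⟩ := s.exists_eq_branch_of_mem_support h₁ h₂ hne x hx₁ hx₂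
    exact ⟨w, Subtype.ext hw⟩

def liftWalk : ∀ {a b : W}, H.Walk a b → G.Walk (s.branch a) (s.branch b)
  | _, _, .nil => .nil
  | _, _, .cons h q => (s.path h).append (liftWalk q)

theorem mem_support_liftWalk {a b : W} (q : H.Walk a b) {x : V}
    (hx : x ∈ (s.liftWalk q).support) :
    x = s.branch a ∨ ∃ (c d : W) (h : H.Adj c d), s(c, d) ∈ q.edges ∧ x ∈ (s.path h).support := by
  induction q with
  | nil => exact .inl (by simpa [liftWalk] using hx)
  | @cons a c b h q ih =>
    rw [liftWalk, Walk.support_append, List.mem_append] at hx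
    refine .inr ?_
    rcases hx with hx | hx
    · exact ⟨a, c, h, by simp, hx⟩
    rcases ih (List.mem_of_mem_tail hx) with rfl | ⟨c', d', h', hq, hx'⟩
    · exact ⟨a, c, h, by simp, (s.path h).end_mem_support⟩
    · exact ⟨c', d', h', by simp [hq], hx'⟩

theorem eq_or_eq_of_mem_support_liftWalk {a b : W} (q₁ q₂ : H.Walk a b)
    (hedges : ∀ e ∈ q₁.edges, e ∉ q₂.edges)
    (hsupport : ∀ w ∈ q₁.support, w ∈ q₂.support → w = a ∨ w = b) {x : V}
    (hx₁ : x ∈ (s.liftWalk q₁).support) (hx₂ : x ∈ (s.liftWalk q₂).support) :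
    x = s.branch a ∨ x = s.branch b := by
  rcases s.mem_support_liftWalk q₁ hx₁ with rfl | ⟨c₁, d₁, h₁, he₁, hx₁⟩
  · exact .inl rfl
  rcases s.mem_support_liftWalk q₂ hx₂ with rfl | ⟨c₂, d₂, h₂, he₂, hx₂⟩
  · exact .inl rfl
  obtain ⟨w, rfl⟩ := s.exists_eq_branch_of_mem_support h₁ h₂
    (fun h => hedges _ he₁ (h ▸ he₂)) _ hx₁ hx₂
  have hw₁ : w ∈ q₁.support := by
    rcases s.eq_or_eq_of_branch_mem_support h₁ w hx₁ with rfl | rfl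
    · exact q₁.fst_mem_support_of_mem_edges he₁
    · exact q₁.snd_mem_support_of_mem_edges he₁
  have hw₂ : w ∈ q₂.support := by
    rcases s.eq_or_eq_of_branch_mem_support h₂ w hx₂ with rfl | rfl
    · exact q₂.fst_mem_support_of_mem_edges he₂
    · exact q₂.snd_mem_support_of_mem_edges he₂
  rcases hsupport w hw₁ hw₂ with rfl | rfl
  · exact .inl rfl
  · exact .inr rfl

end Subdivision

def HasIndependentWalkPair (H : SimpleGraph W) (a b : W) : Prop :=
  ∃ q₁ q₂ : H.Walk a b, (∀ e ∈ q₁.edges, e ∉ q₂.edges) ∧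
    ∀ w ∈ q₁.support, w ∈ q₂.support → w = a ∨ w = b

theorem HasIndependentWalkPair.symm {a b : W} (h : H.HasIndependentWalkPair a b) :
    H.HasIndependentWalkPair b a := by
  obtain ⟨q₁, q₂, hedges, hsupport⟩ := h
  refine ⟨q₁.reverse, q₂.reverse, by simpa using hedges, fun w hw₁ hw₂ => ?_⟩
  rw [Walk.support_reverse, List.mem_reverse] at hw₁ hw₂
  exact (hsupport w hw₁ hw₂).symm

theorem hasIndependentWalkPair_of_adj {a b : W} (hab : H.Adj a b) (q : H.Walk a b)
    (hq : s(a, b) ∉ q.edges) : H.HasIndependentWalkPair a b :=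
  ⟨.cons hab .nil, q, by simpa using hq, by simp +contextual⟩

theorem hasIndependentWalkPair_of_adj_of_adj {a b c d : W} (hac : H.Adj a c) (hcb : H.Adj c b)
    (had : H.Adj a d) (hdb : H.Adj d b) (hcd : c ≠ d) : H.HasIndependentWalkPair a b := by
  refine ⟨.cons hac (.cons hcb .nil), .cons had (.cons hdb .nil), ?_, ?_⟩
  · simp [hcd, hcb.ne, had.ne, hac.ne.symm, hdb.ne.symm]
  · simp +contextual [hcd, hac.ne.symm, hcb.ne]

theorem completeGraph_hasIndependentWalkPair {a b c : V} (hab : a ≠ b) (hca : c ≠ a)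
    (hcb : c ≠ b) : (completeGraph V).HasIndependentWalkPair a b :=
  hasIndependentWalkPair_of_adj hab (.cons hca.symm (.cons hcb .nil))
    (by simp [hab, hcb.symm, hca.symm])

theorem completeBipartiteGraph_hasIndependentWalkPair {α β : Type*} [Nontrivial α]
    [Nontrivial β] (x y : α ⊕ β) : (completeBipartiteGraph α β).HasIndependentWalkPair x y := by
  obtain ⟨a₀, a₁, ha⟩ := exists_pair_ne α
  obtain ⟨b₀, b₁, hb⟩ := exists_pair_ne β
  have cross (a : α) (b : β) :
      (completeBipartiteGraph α β).HasIndependentWalkPair (.inl a) (.inr b) := by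
    obtain ⟨a', ha'⟩ := exists_ne a
    obtain ⟨b', hb'⟩ := exists_ne b
    exact hasIndependentWalkPair_of_adj (by simp)
      (.cons (v := .inr b') (by simp) (.cons (v := .inl a') (by simp) (.cons (by simp) .nil)))
      (by simp [ha'.symm, hb'.symm])
  rcases x with a | b <;> rcases y with a' | b'
  · exact hasIndependentWalkPair_of_adj_of_adj (c := .inr b₀) (d := .inr b₁)
      (by simp) (by simp) (by simp) (by simp) (by simpa using hb)
  · exact cross a b'
  · exact (cross a' b).symm
  · exact hasIndependentWalkPair_of_adj_of_adj (c := .inl a₀) (d := .inl a₁)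
      (by simp) (by simp) (by simp) (by simp) (by simpa using ha)

end SimpleGraph

theorem containsSubdivision_iff_nonempty {V W : Type} {G : SimpleGraph V} {H : SimpleGraph W} :
    ContainsSubdivision G H ↔ Nonempty (G.Subdivision H) :=
  ⟨fun ⟨f, p, h₁, h₂, h₃, h₄⟩ => ⟨⟨f, p, h₁, h₂, h₃, h₄⟩⟩,
    fun ⟨s⟩ => ⟨s.branch, s.path, s.isPath, s.path_symm, s.eq_or_eq_of_branch_mem_support,
      s.exists_eq_branch_of_mem_support⟩⟩

theorem IsPlanar.of_embedding {V V' : Type} {G : SimpleGraph V} {G' : SimpleGraph V'}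
    (h : IsPlanar G') (φ : G ↪g G') : IsPlanar G := by
  simp only [IsPlanar, containsSubdivision_iff_nonempty, not_nonempty_iff] at h ⊢
  exact ⟨⟨fun s => h.1.false (s.map φ)⟩, ⟨fun s => h.2.false (s.map φ)⟩⟩

theorem cayleyGraph_eq_mulCayley (G : Type) [Group G] (S : Set G) :
    cayleyGraph G S = SimpleGraph.mulCayley S := by
  ext x y
  simp [cayleyGraph, SimpleGraph.mulCayley, eq_comm]

def cayleyGraphEmbedding {H G : Type} [Group H] [Group G] (φ : H →* G)
    (hφ : Function.Injective φ) {T : Set H} {S : Set G} (hST : ∀ h ≠ 1, φ h ∈ S ↔ h ∈ T)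
    (g : G) : cayleyGraph H T ↪g cayleyGraph G S where
  toFun x := g * φ x
  inj' x y h := hφ (mul_left_cancel h)
  map_rel_iff' {x y} := by
    have hquot : ∀ x y : H, (g * φ x)⁻¹ * (g * φ y) = φ (x⁻¹ * y) := by
      intro x y
      rw [map_mul, map_inv]
      group
    have hne : g * φ x ≠ g * φ y ↔ x ≠ y := (mul_right_injective g).ne_iff.trans hφ.ne_iff
    change (cayleyGraph G S).Adj (g * φ x) (g * φ y) ↔ (cayleyGraph H T).Adj x y
    rw [cayleyGraph_eq_mulCayley, cayleyGraph_eq_mulCayley, SimpleGraph.mulCayley_adj,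
      SimpleGraph.mulCayley_adj, hquot, hquot, hne]
    refine and_congr_right fun hxy => or_congr (hST _ ?_) (hST _ ?_)
    · exact fun h => hxy (inv_mul_eq_one.mp h)
    · exact fun h => hxy (inv_mul_eq_one.mp h).symm

namespace Monoid.CoprodI

open SimpleGraph Subgroup

variable {ι : Type*} {M : ι → Type*} [∀ i, Group (M i)]

variable (M) in
abbrev factor (i : ι) : Subgroup (CoprodI M) := (of : M i →* CoprodI M).range

namespace Word

variable [∀ i, DecidableEq (M i)]

theorem toList_rcons {i : ι} (p : Pair M i) :
    (rcons p).toList = p.tail.toList ∨ (rcons p).toList = ⟨i, p.head⟩ :: p.tail.toList := by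
  unfold rcons
  split
  · exact .inl rfl
  · exact .inr rfl

theorem tail_toList_suffix_rcons {i : ι} (p : Pair M i) : p.tail.toList <:+ (rcons p).toList := by
  rcases toList_rcons p with h | h <;> simp [h]

theorem tail_rcons_suffix_tail_toList {i : ι} (p : Pair M i) :
    (rcons p).toList.tail <:+ p.tail.toList := by
  rcases toList_rcons p with h | h <;> simp [h, List.tail_suffix]

variable [DecidableEq ι]

theorem equiv_mul (g h : CoprodI M) : equiv (g * h) = g • equiv h :=
  mul_smul g h (empty : Word M)

theorem equiv_prod (w : Word M) : equiv w.prod = w :=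
  equiv.apply_symm_apply w

theorem tail_suffix_toList_smul {i : ι} (m : M i) (w : Word M) :
    w.toList.tail <:+ (of m • w).toList := by
  have hw : rcons (equivPair i w) = w := (equivPair i).symm_apply_apply w
  calc w.toList.tail <:+ (equivPair i w).tail.toList := by
        simpa only [hw] using tail_rcons_suffix_tail_toList (equivPair i w)
    _ <:+ (of m • w).toList :=
        tail_toList_suffix_rcons { equivPair i w with head := m * (equivPair i w).head }

theorem equiv_of {i : ι} {m : M i} (hm : m ≠ 1) :
    equiv (of m) = cons m empty (by simp [fstIdx]) hm := by
  rw [cons_eq_smul]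
  rfl

theorem toList_equiv_of_mul_of {i j : ι} (hij : i ≠ j) {m : M i} {n : M j} (hm : m ≠ 1)
    (hn : n ≠ 1) : (equiv (of m * of n)).toList = [⟨i, m⟩, ⟨j, n⟩] := by
  rw [equiv_mul, equiv_of hn, ← cons_eq_smul (h1 := by simp [fstIdx, Ne.symm hij]) (h2 := hm)]
  rfl

end Word

theorem ne_one_of_of_eq_inv_mul {i : ι} {m : M i} {x y : CoprodI M} (hm : of m = x⁻¹ * y)
    (hxy : x ≠ y) : m ≠ 1 := by
  rintro rfl
  exact hxy (inv_mul_eq_one.mp (hm.symm.trans (map_one _)))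

theorem length_toList_equiv_le_one [DecidableEq ι] [∀ i, DecidableEq (M i)] {i : ι}
    {g : CoprodI M} (hg : g ∈ factor M i) : (Word.equiv g).toList.length ≤ 1 := by
  obtain ⟨m, rfl⟩ := hg
  rcases eq_or_ne m 1 with rfl | hm
  · simp [Word.equiv]
  · simp [Word.equiv_of hm]

theorem eq_one_of_mem_factor_of_mem_factor {i j : ι} (hij : i ≠ j) {g : CoprodI M}
    (hi : g ∈ factor M i) (hj : g ∈ factor M j) : g = 1 := by
  classical
  obtain ⟨m, rfl⟩ := hi
  obtain ⟨n, hn⟩ := hj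
  by_contra hm
  have hn1 : n ≠ 1 := by rintro rfl; exact hm (by simp [← hn])
  have hm1 : m ≠ 1 := by rintro rfl; exact hm (map_one _)
  have := congrArg (fun g => (Word.equiv g).toList) hn
  simp only [Word.equiv_of hm1, Word.equiv_of hn1, Word.cons_toList, Word.empty_toList,
    List.cons.injEq, and_true] at this
  exact hij (congrArg Sigma.fst this).symm

theorem of_mul_of_notMem_factor {i j : ι} (hij : i ≠ j) {m : M i} {n : M j} (hm : m ≠ 1)
    (hn : n ≠ 1) (k : ι) : of m * of n ∉ factor M k := by
  classical
  intro h
  have := length_toList_equiv_le_one h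
  simp [Word.toList_equiv_of_mul_of hij hm hn] at this

theorem inv_mul_mem_factor_of_triangle {x y z : CoprodI M} {i j k : ι} (hxy : x ≠ y)
    (hxz : x ≠ z) (hi : x⁻¹ * y ∈ factor M i) (hj : x⁻¹ * z ∈ factor M j)
    (hk : y⁻¹ * z ∈ factor M k) : x⁻¹ * z ∈ factor M i := by
  rcases eq_or_ne i j with rfl | hij
  · exact hj
  obtain ⟨m, hm⟩ := hi
  obtain ⟨n, hn⟩ := hj
  refine absurd ?_ (of_mul_of_notMem_factor hij (inv_ne_one.mpr (ne_one_of_of_eq_inv_mul hm hxy))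
    (ne_one_of_of_eq_inv_mul hn hxz) k)
  rwa [map_inv, hm, hn, mul_inv_rev, inv_inv, mul_assoc, mul_inv_cancel_left]

theorem exists_forall_inv_mul_mem_factor {W : Type*} [Nontrivial W] {u : W → CoprodI M}
    (hu : Function.Injective u) (hpair : ∀ a b, a ≠ b → ∃ i, (u a)⁻¹ * u b ∈ factor M i) :
    ∃ i, ∀ a b, (u a)⁻¹ * u b ∈ factor M i := by
  obtain ⟨a₀, a₁, h01⟩ := exists_pair_ne W
  obtain ⟨i, hi⟩ := hpair a₀ a₁ h01
  have hbase : ∀ b, (u a₀)⁻¹ * u b ∈ factor M i := by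
    intro b
    rcases eq_or_ne a₀ b with rfl | h0b
    · rw [inv_mul_cancel]
      exact one_mem _
    rcases eq_or_ne a₁ b with rfl | h1b
    · exact hi
    obtain ⟨j, hj⟩ := hpair a₀ b h0b
    obtain ⟨k, hk⟩ := hpair a₁ b h1b
    exact inv_mul_mem_factor_of_triangle (hu.ne h01) (hu.ne h0b) hi hj hk
  exact ⟨i, fun a b => inv_mul_mem_trans (inv_mul_mem_comm.mp (hbase a)) (hbase b)⟩

section FactorGraph

variable {X : SimpleGraph (CoprodI M)} (hX : ∀ x y, X.Adj x y → ∃ i, x⁻¹ * y ∈ factor M i)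
include hX

theorem mul_of_mem_support [DecidableEq ι] [∀ i, DecidableEq (M i)] {u v : CoprodI M} {i : ι}
    {c : M i} (hc : c ≠ 1) {w : Word M} (hw : w.fstIdx ≠ some i) (hne : w ≠ Word.empty)
    (huv : u⁻¹ * v = of c * w.prod) (p : X.Walk u v) : u * of c ∈ p.support := by
  -- the side of the cut vertex `u * of c` containing `u`: there the reduced word of `x⁻¹ * v`
  -- still contains all of `w` after its first letter
  let S : Set (CoprodI M) := {x | w.toList <:+ (Word.equiv (x⁻¹ * v)).toList.tail}
  have huS : u ∈ S := by
    simp only [S, Set.mem_ofPred_eq, huv, ← Word.prod_cons i c w hc hw,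
      Word.equiv_prod, Word.cons_toList, List.tail_cons, List.suffix_refl]
  have hvS : v ∉ S := by
    simp only [S, Set.mem_ofPred_eq, inv_mul_cancel, ← Word.prod_empty, Word.equiv_prod,
      Word.empty_toList, List.tail_nil, List.suffix_nil]
    exact fun h => hne (Word.ext h)
  obtain ⟨d, hd, hxS, hyS⟩ := p.exists_boundary_dart S huS hvS
  obtain ⟨k, m, hm⟩ := hX _ _ d.adj
  have hsmul : Word.equiv (d.snd⁻¹ * v) = of m⁻¹ • Word.equiv (d.fst⁻¹ * v) := by
    rw [← Word.equiv_mul, map_inv, hm]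
    group
  have hsuffix : w.toList <:+ (Word.equiv (d.snd⁻¹ * v)).toList :=
    hxS.trans (hsmul ▸ Word.tail_suffix_toList_smul _ _)
  have hword : Word.equiv (d.snd⁻¹ * v) = w := by
    apply Word.ext
    rcases hl : (Word.equiv (d.snd⁻¹ * v)).toList with _ | ⟨a, l⟩
    · exact absurd (Word.ext (List.eq_nil_of_suffix_nil (hl ▸ hsuffix))) hne
    · rw [hl] at hsuffix
      rcases List.suffix_cons_iff.mp hsuffix with h | h
      · exact h.symm
      · exact absurd (by simpa [S, hl] using h) hyS
  have hsnd : d.snd = u * of c := by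
    have h : d.snd⁻¹ * v = w.prod := Word.equiv.injective (hword.trans (Word.equiv_prod w).symm)
    calc d.snd = v * (d.snd⁻¹ * v)⁻¹ := by group
      _ = u * (u⁻¹ * v) * w.prod⁻¹ := by rw [h]; group
      _ = u * of c := by rw [huv]; group
  rw [← hsnd]
  exact p.dart_snd_mem_support_of_mem_darts hd

theorem inv_mul_mem_factor_of_mem_support {u v : CoprodI M} {i : ι} (p : X.Walk u v)
    (hp : p.IsPath) (huv : u⁻¹ * v ∈ factor M i) : ∀ x ∈ p.support, u⁻¹ * x ∈ factor M i := by
  classical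
  induction p with
  | nil =>
    intro x hx
    rw [Walk.mem_support_nil_iff.mp hx, inv_mul_cancel]
    exact one_mem _
  | @cons u b v hub p ih =>
    rw [Walk.cons_isPath_iff] at hp
    obtain ⟨j, m, hm⟩ := hX u b hub
    rcases eq_or_ne j i with rfl | hji
    · intro x hx
      rw [Walk.support_cons, List.mem_cons] at hx
      rcases hx with rfl | hx
      · rw [inv_mul_cancel]
        exact one_mem _
      · exact inv_mul_mem_trans ⟨m, hm⟩
          (ih hp.1 (inv_mul_mem_trans (inv_mul_mem_comm.mp ⟨m, hm⟩) huv) x hx)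
    · -- `u` separates `b` from `v`, so the rest of the path would revisit `u`
      obtain ⟨n, hn⟩ := huv
      have hn1 : n ≠ 1 := ne_one_of_of_eq_inv_mul hn fun h => hp.2 (h ▸ p.end_mem_support)
      have hbv : b⁻¹ * v = of m⁻¹ * (Word.cons n Word.empty (by simp [Word.fstIdx]) hn1).prod := by
        rw [Word.prod_cons, Word.prod_empty, mul_one, map_inv, hm, hn]
        group
      have hu := mul_of_mem_support hX (inv_ne_one.mpr (ne_one_of_of_eq_inv_mul hm hub.ne))
        (by simp [Word.fstIdx, hji.symm]) (by simp [Word.ext_iff]) hbv p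
      rw [map_inv, hm] at hu
      exact absurd (by simpa using hu) hp.2

theorem exists_inv_mul_mem_factor_of_walks {u v : CoprodI M} (huv : u ≠ v) (p q : X.Walk u v)
    (hpq : ∀ x ∈ p.support, x ∈ q.support → x = u ∨ x = v) : ∃ i, u⁻¹ * v ∈ factor M i := by
  classical
  by_contra! hnot
  have hprod : u⁻¹ * v = (Word.equiv (u⁻¹ * v)).prod := (Word.equiv.symm_apply_apply _).symm
  generalize Word.equiv (u⁻¹ * v) = w at hprod
  induction w using Word.consRecOn with
  | empty => exact huv (inv_mul_eq_one.mp hprod)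
  | cons i c w hw hc _ =>
    rw [Word.prod_cons] at hprod
    rcases eq_or_ne w Word.empty with rfl | hne
    · exact hnot i ⟨c, by simp [hprod]⟩
    rcases hpq _ (mul_of_mem_support hX hc hw hne hprod p)
      (mul_of_mem_support hX hc hw hne hprod q) with h | h
    · exact hc (of_injective i (by simpa using h))
    · exact hnot i ⟨c, by rw [← h]; group⟩

end FactorGraph

section CayleyGraph

variable {ι : Type} {M : ι → Type} [∀ i, Group (M i)] (S : ∀ i, Set (M i))

theorem exists_inv_mul_mem_factor_of_adj (x y : CoprodI M)
    (h : (cayleyGraph (CoprodI M) (⋃ i, of '' S i)).Adj x y) : ∃ i, x⁻¹ * y ∈ factor M i := by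
  rw [cayleyGraph_eq_mulCayley, mulCayley_adj] at h
  rcases h.2 with h | h <;> obtain ⟨i, m, -, hm⟩ := Set.mem_iUnion.mp h
  · exact ⟨i, m, hm⟩
  · exact ⟨i, m⁻¹, by rw [map_inv, hm, mul_inv_rev, inv_inv]⟩

theorem of_mem_iUnion_image_of_iff {i : ι} {m : M i} (hm : m ≠ 1) :
    of m ∈ ⋃ j, of '' S j ↔ m ∈ S i := by
  refine ⟨fun h => ?_, fun h => Set.mem_iUnion.mpr ⟨i, m, h, rfl⟩⟩
  obtain ⟨j, n, hn, hnm⟩ := Set.mem_iUnion.mp h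
  rcases eq_or_ne j i with rfl | hji
  · exact of_injective j hnm ▸ hn
  · exact absurd (of_injective i ((eq_one_of_mem_factor_of_mem_factor hji ⟨n, hnm⟩ ⟨m, rfl⟩).trans
      (map_one _).symm)) hm

def cosetEmbedding (u : CoprodI M) (i : ι) :
    cayleyGraph (M i) (S i) ↪g cayleyGraph (CoprodI M) (⋃ j, of '' S j) :=
  cayleyGraphEmbedding of (of_injective i) (fun _ hm => of_mem_iUnion_image_of_iff S hm) u

theorem cosetEmbedding_apply (u : CoprodI M) (i : ι) (m : M i) :
    cosetEmbedding S u i m = u * of m :=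
  rfl

theorem exists_subdivision_cayleyGraph_factor {W : Type} [Nontrivial W] {H : SimpleGraph W}
    (hH : ∀ a b, a ≠ b → H.HasIndependentWalkPair a b)
    (s : (cayleyGraph (CoprodI M) (⋃ i, of '' S i)).Subdivision H) :
    ∃ i, Nonempty ((cayleyGraph (M i) (S i)).Subdivision H) := by
  have hX := exists_inv_mul_mem_factor_of_adj S
  have hpair : ∀ a b, a ≠ b → ∃ i, (s.branch a)⁻¹ * s.branch b ∈ factor M i := by
    intro a b hab
    obtain ⟨q₁, q₂, hedges, hsupport⟩ := hH a b hab
    exact exists_inv_mul_mem_factor_of_walks hX (s.branch.injective.ne hab)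
      (s.liftWalk q₁) (s.liftWalk q₂)
      (fun x hx₁ hx₂ => s.eq_or_eq_of_mem_support_liftWalk q₁ q₂ hedges hsupport hx₁ hx₂)
  obtain ⟨i, hi⟩ := exists_forall_inv_mul_mem_factor s.branch.injective hpair
  obtain ⟨a₀⟩ := (inferInstance : Nonempty W)
  let ψ := cosetEmbedding S (s.branch a₀) i
  have hψ : ∀ x, (s.branch a₀)⁻¹ * x ∈ factor M i → x ∈ Set.range ψ := by
    rintro x ⟨m, hm⟩
    exact ⟨m, by rw [cosetEmbedding_apply, hm, mul_inv_cancel_left]⟩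
  have hpath {a b : W} (h : H.Adj a b) : ∀ x ∈ (s.path h).support, x ∈ Set.range ψ :=
    fun x hx => hψ x <| inv_mul_mem_trans (hi a₀ a)
      (inv_mul_mem_factor_of_mem_support hX (s.path h) (s.isPath h) (hi a b) x hx)
  exact ⟨i, ⟨(s.induce _ (fun w => hψ _ (hi a₀ w)) hpath).map
    ψ.isoInduceRange.symm.toEmbedding⟩⟩

theorem isPlanar_cayleyGraph (h : ∀ i, IsPlanar (cayleyGraph (M i) (S i))) :
    IsPlanar (cayleyGraph (CoprodI M) (⋃ i, of '' S i)) := by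
  simp only [IsPlanar, containsSubdivision_iff_nonempty, not_nonempty_iff] at h ⊢
  refine ⟨⟨fun s => ?_⟩, ⟨fun s => ?_⟩⟩
  · have hK₅ : ∀ a b : Fin 5, a ≠ b → (completeGraph (Fin 5)).HasIndependentWalkPair a b := by
      intro a b hab
      obtain ⟨c, hca, hcb⟩ : ∃ c : Fin 5, c ≠ a ∧ c ≠ b := by
        revert a b
        decide
      exact completeGraph_hasIndependentWalkPair hab hca hcb
    obtain ⟨i, ⟨t⟩⟩ := exists_subdivision_cayleyGraph_factor S hK₅ s
    exact (h i).1.false t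
  · have : Nontrivial (Fin 3 ⊕ Fin 3) := ⟨⟨.inl 0, .inr 0, Sum.inl_ne_inr⟩⟩
    obtain ⟨i, ⟨t⟩⟩ := exists_subdivision_cayleyGraph_factor S
      (fun x y _ => completeBipartiteGraph_hasIndependentWalkPair x y) s
    exact (h i).2.false t

end CayleyGraph

end Monoid.CoprodI

namespace GraphProduct

open Monoid

variable {V : Type} {Γ : SimpleGraph V} {o : V → ℕ}

def of (v : V) : GraphProduct Γ o := PresentedGroup.of v

theorem of_pow (v : V) : (of v : GraphProduct Γ o) ^ o v = 1 :=
  (map_pow _ _ _).symm.trans (PresentedGroup.one_of_mem (.inl ⟨v, rfl⟩))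

theorem commute_of_adj {v w : V} (h : Γ.Adj v w) : Commute (of v : GraphProduct Γ o) (of w) :=
  commutatorElement_eq_one_iff_commute.mp <|
    (map_commutatorElement _ _ _).symm.trans (PresentedGroup.one_of_mem (.inr ⟨v, w, h, rfl⟩))

def lift {G : Type*} [Group G] (f : V → G) (hpow : ∀ v, f v ^ o v = 1)
    (hcomm : ∀ v w, Γ.Adj v w → Commute (f v) (f w)) : GraphProduct Γ o →* G :=
  PresentedGroup.toGroup (f := f) (rels := graphProductRels Γ o) <| by
    rintro r (⟨v, rfl⟩ | ⟨v, w, h, rfl⟩)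
    · simpa using hpow v
    · simpa [commutatorElement_eq_one_iff_commute] using hcomm v w h

@[simp]
theorem lift_of {G : Type*} [Group G] (f : V → G) (hpow : ∀ v, f v ^ o v = 1)
    (hcomm : ∀ v w, Γ.Adj v w → Commute (f v) (f w)) (v : V) :
    lift f hpow hcomm (of v) = f v :=
  PresentedGroup.toGroup.of _

theorem hom_ext {G : Type*} [Group G] {φ ψ : GraphProduct Γ o →* G}
    (h : ∀ v, φ (of v) = ψ (of v)) : φ = ψ :=
  PresentedGroup.ext h

variable (Γ o) {κ : Type} (part : V → κ)

abbrev Piece (k : κ) : Type := GraphProduct (Γ.induce (part ⁻¹' {k})) (fun v => o v)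

def ofPiece {k : κ} (v : V) (hv : v ∈ part ⁻¹' {k}) : CoprodI (Piece Γ o part) :=
  CoprodI.of (of (Γ := Γ.induce (part ⁻¹' {k})) ⟨v, hv⟩)

theorem ofPiece_eq {k : κ} (v : V) (hv : v ∈ part ⁻¹' {k}) :
    ofPiece Γ o part v hv = ofPiece Γ o part v (Set.mem_preimage_singleton_self part v) := by
  obtain rfl : part v = k := hv
  rfl

variable {part} (hpart : ∀ v w, Γ.Adj v w → part v = part w)

def toCoprodI : GraphProduct Γ o →* CoprodI (Piece Γ o part) :=
  lift (fun v => ofPiece Γ o part v (Set.mem_preimage_singleton_self part v))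
    (fun v => by rw [ofPiece, ← map_pow, of_pow, map_one]) fun v w h => by
      rw [← ofPiece_eq Γ o part w (k := part v) (hpart v w h).symm]
      exact (commute_of_adj (Γ := Γ.induce _) (v := ⟨v, _⟩) (w := ⟨w, _⟩) h).map _

def ofCoprodI : CoprodI (Piece Γ o part) →* GraphProduct Γ o :=
  CoprodI.lift fun _ => lift (fun v => of v.1) (fun v => of_pow v.1) fun _ _ h => commute_of_adj h

def mulEquivCoprodI : GraphProduct Γ o ≃* CoprodI (Piece Γ o part) :=
  MonoidHom.toMulEquiv (toCoprodI Γ o hpart) (ofCoprodI Γ o)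
    (hom_ext fun v => by simp [toCoprodI, ofPiece, ofCoprodI])
    (CoprodI.ext_hom _ _ fun k => hom_ext fun ⟨v, hv⟩ => by
      simp only [MonoidHom.comp_apply, ofCoprodI, CoprodI.lift_of, lift_of, toCoprodI]
      exact (ofPiece_eq Γ o part v hv).symm)

theorem mulEquivCoprodI_of (v : V) :
    mulEquivCoprodI Γ o hpart (of v) =
      ofPiece Γ o part v (Set.mem_preimage_singleton_self part v) :=
  show toCoprodI Γ o hpart (of v) = _ from lift_of _ _ _ v

def cayleyGraphEmbeddingCoprodI :
    cayleyGraphGP Γ o ↪g cayleyGraph (CoprodI (Piece Γ o part))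
      (⋃ k, CoprodI.of '' Set.range (of : _ → Piece Γ o part k)) :=
  cayleyGraphEmbedding (mulEquivCoprodI Γ o hpart).toMonoidHom
    (mulEquivCoprodI Γ o hpart).injective (fun g _ => by
      constructor
      · rintro ⟨-, ⟨k, rfl⟩, ⟨-, ⟨⟨v, hv⟩, rfl⟩, hg⟩⟩
        refine ⟨v, (mulEquivCoprodI Γ o hpart).injective ?_⟩
        rw [← MulEquiv.coe_toMonoidHom, ← hg]
        exact (mulEquivCoprodI_of Γ o hpart v).trans (ofPiece_eq Γ o part v hv).symm
      · rintro ⟨v, rfl⟩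
        exact Set.mem_iUnion.mpr ⟨part v, _, ⟨_, rfl⟩, (mulEquivCoprodI_of Γ o hpart v).symm⟩) 1

end GraphProduct

theorem stmt_13_general {V : Type} (Γ : SimpleGraph V) (o : V → ℕ)
    (A B : Set V) (hU : A ∪ B = Set.univ) (hI : A ∩ B = ∅)
    (hE : ∀ a ∈ A, ∀ b ∈ B, ¬ Γ.Adj a b)
    (h₁ : IsPlanar (cayleyGraphGP (Γ.induce A) (fun v => o v)))
    (h₂ : IsPlanar (cayleyGraphGP (Γ.induce B) (fun v => o v))) :
    IsPlanar (cayleyGraphGP Γ o) := by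
  classical
  have hB : Aᶜ = B :=
    IsCompl.compl_eq ⟨Set.disjoint_iff_inter_eq_empty.mpr hI, codisjoint_iff.mpr hU⟩
  let part : V → Bool := fun v => decide (v ∈ A)
  have hpart : ∀ v w, Γ.Adj v w → part v = part w := by
    intro v w h
    by_cases hv : v ∈ A <;> by_cases hw : w ∈ A <;> simp only [part, hv, hw]
    · exact absurd h (hE v hv w (hB ▸ hw))
    · exact absurd h.symm (hE w hw v (hB ▸ hv))
  refine (Monoid.CoprodI.isPlanar_cayleyGraph _ fun k => ?_).of_embedding
    (GraphProduct.cayleyGraphEmbeddingCoprodI Γ o hpart)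
  cases k
  · rw [← show part ⁻¹' {false} = B by ext v; simp [part, ← hB]] at h₂
    exact h₂
  · rw [← show part ⁻¹' {true} = A by ext v; simp [part]] at h₁
    exact h₁

/-- Let `Γ` be a finite graph product graph of finite cyclic groups which is the disjoint union
of two induced subgraphs `Γ₁ = Γ[A]`, `Γ₂ = Γ[B]` with no edges between them. If the Cayley
graphs of `G(Γ₁)` and `G(Γ₂)` are planar, then the Cayley graph of `G(Γ)` is planar. -/
theorem stmt_13 {V : Type} [Finite V] (Γ : SimpleGraph V) (o : V → ℕ) (ho : ∀ v, 2 ≤ o v)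
    (A B : Set V) (hU : A ∪ B = Set.univ) (hI : A ∩ B = ∅)
    (hE : ∀ a ∈ A, ∀ b ∈ B, ¬ Γ.Adj a b)
    (h₁ : IsPlanar (cayleyGraphGP (Γ.induce A) (fun v => o v)))
    (h₂ : IsPlanar (cayleyGraphGP (Γ.induce B) (fun v => o v))) :
    IsPlanar (cayleyGraphGP Γ o) :=
  stmt_13_general Γ o A B hU hI hE h₁ h₂
end

section
/- Let Γ be a cycle of length 3 (a triangle) with vertex groups ⟨a⟩, ⟨b⟩, ⟨v⟩ of orders 2, 2, n respectively with n ≥ 3. Then G(Γ) ≅ ℤ/2 × ℤ/2 × ℤ/n, and its Cayley graph with respect to {a, b, v} contains a subdivision of K_{3,3} with suitably chosen branch vertices (such as 1, v, a·v^{n-1}, b, a·b·v, v^{n-1}), hence is non-planar. -/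
/-- `G` contains, as a subgraph, a subdivision of `H` whose set of branch vertices is exactly
`s`. -/
def ContainsSubdivisionOn {V W : Type} (G : SimpleGraph V) (H : SimpleGraph W) (s : Set V) :
    Prop :=
  ∃ (f : W ↪ V) (p : ∀ {a b : W}, H.Adj a b → G.Walk (f a) (f b)),
    Set.range ⇑f = s ∧
    (∀ {a b : W} (h : H.Adj a b), (p h).IsPath) ∧
    (∀ {a b : W} (h : H.Adj a b), p h.symm = (p h).reverse) ∧
    (∀ {a b : W} (h : H.Adj a b) (c : W), f c ∈ (p h).support → c = a ∨ c = b) ∧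
    (∀ {a b c d : W} (h₁ : H.Adj a b) (h₂ : H.Adj c d), s(a, b) ≠ s(c, d) →
      ∀ x, x ∈ (p h₁).support → x ∈ (p h₂).support → ∃ w : W, x = f w)



open Multiplicative
open scoped commutatorElement


section Part1
variable (n : ℕ) [hfn : Fact (3 ≤ n)]

private lemma hn3 : 3 ≤ n := hfn.out

instance fact1lt : Fact (1 < n) := ⟨by have := hn3 n; omega⟩
instance neZeroN : NeZero n := ⟨by have := hn3 n; omega⟩

abbrev TT := Multiplicative (ZMod 2 × ZMod 2 × ZMod n)

def gens : Fin 3 → TT n :=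
  ![ofAdd (1,0,0), ofAdd (0,1,0), ofAdd (0,0,1)]

abbrev rels3 : Set (FreeGroup (Fin 3)) := graphProductRels (SimpleGraph.completeGraph (Fin 3)) ![2,2,n]

lemma gens_rels : ∀ r ∈ rels3 n, FreeGroup.lift (gens n) r = 1 := by
  rintro r (⟨v, rfl⟩ | ⟨v, w, hadj, rfl⟩)
  · rw [map_pow, FreeGroup.lift_apply_of]
    fin_cases v <;>
      simp [gens, ← ofAdd_nsmul, Prod.smul_def, nsmul_eq_mul, ZMod.natCast_self] <;> decide
  · rw [map_commutatorElement]
    exact commutatorElement_eq_one_iff_commute.mpr (Commute.all _ _)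

abbrev PG := PresentedGroup (rels3 n)

def ee (i : Fin 3) : PG n := PresentedGroup.of i

lemma rel_one {r : FreeGroup (Fin 3)} (hr : r ∈ rels3 n) :
    (QuotientGroup.mk r : PG n) = 1 :=
  (QuotientGroup.eq_one_iff r).mpr (Subgroup.subset_normalClosure hr)

lemma mk_of (i : Fin 3) : (QuotientGroup.mk (FreeGroup.of i) : PG n) = ee n i := rfl

lemma he (i : Fin 3) : ee n i ^ (![2,2,n] i) = 1 := by
  have := rel_one n (r := FreeGroup.of i ^ ![2,2,n] i) (Or.inl ⟨i, rfl⟩)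
  rwa [QuotientGroup.mk_pow, mk_of] at this

lemma hcomm {i j : Fin 3} (hij : i ≠ j) : Commute (ee n i) (ee n j) := by
  rw [← commutatorElement_eq_one_iff_commute]
  exact rel_one n (r := ⁅FreeGroup.of i, FreeGroup.of j⁆)
    (Or.inr ⟨i, j, by simpa [SimpleGraph.completeGraph] using hij, rfl⟩)

lemma pow_mod' {G : Type*} [Group G] {g : G} {m : ℕ} (h : g ^ m = 1) (a : ℕ) :
    g ^ (a % m) = g ^ a := by
  conv_rhs => rw [← Nat.div_add_mod a m, pow_add, pow_mul, h, one_pow, one_mul]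

def ψfun : ZMod 2 × ZMod 2 × ZMod n → PG n :=
  fun t => ee n 0 ^ t.1.val * ee n 1 ^ t.2.1.val * ee n 2 ^ t.2.2.val

lemma he0 : ee n 0 ^ (2:ℕ) = 1 := by simpa using he n 0
lemma he1 : ee n 1 ^ (2:ℕ) = 1 := by simpa using he n 1
lemma he2 : ee n 2 ^ n = 1 := by simpa using he n 2

def ψ : TT n →* PG n :=
  MonoidHom.mk' (fun t => ψfun n t.toAdd) (by
    rintro a b
    show ψfun n (a.toAdd + b.toAdd) = ψfun n a.toAdd * ψfun n b.toAdd
    obtain ⟨x, y, z⟩ := a.toAdd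
    obtain ⟨x', y', z'⟩ := b.toAdd
    unfold ψfun
    simp only [Prod.fst_add, Prod.snd_add, Prod.mk_add_mk, ZMod.val_add,
      pow_mod' (he0 n), pow_mod' (he1 n), pow_mod' (he2 n), pow_add]
    have c01 : ∀ s t : ℕ, Commute (ee n 0 ^ s) (ee n 1 ^ t) :=
      fun s t => (hcomm n (by decide)).pow_pow s t
    have c02 : ∀ s t : ℕ, Commute (ee n 0 ^ s) (ee n 2 ^ t) :=
      fun s t => (hcomm n (by decide)).pow_pow s t
    have c12 : ∀ s t : ℕ, Commute (ee n 1 ^ s) (ee n 2 ^ t) :=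
      fun s t => (hcomm n (by decide)).pow_pow s t
    conv_rhs => rw [Commute.mul_mul_mul_comm
      (((c02 x'.val z.val).symm).mul_right ((c12 y'.val z.val).symm)),
      Commute.mul_mul_mul_comm ((c01 x'.val y.val).symm)]
    )

def φ : PG n →* TT n := PresentedGroup.toGroup (gens_rels n)

lemma hψgens : ∀ i, ψ n (gens n i) = ee n i := by
  intro i
  fin_cases i <;>
    · show ψfun n _ = _
      unfold ψfun gens
      simp [ZMod.val_one]

lemma lift_of_rels : ∀ r ∈ rels3 n, FreeGroup.lift (fun i => ee n i) r = 1 := by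
  have key : FreeGroup.lift (fun i => ee n i) =
      (QuotientGroup.mk' (Subgroup.normalClosure (rels3 n))) := by
    apply FreeGroup.ext_hom
    intro i
    simp [mk_of]
    rfl
  intro r hr
  rw [key]
  exact rel_one n hr

lemma hid1 : (ψ n).comp (φ n) = MonoidHom.id (PG n) := by
  have h1 : ∀ x, ((ψ n).comp (φ n)) (PresentedGroup.of x) = ee n x := by
    intro x
    simp [φ, PresentedGroup.toGroup.of, hψgens]
  have h2 : ∀ x : PG n, ((ψ n).comp (φ n)) x = (MonoidHom.id (PG n)) x := by
    intro x
    rw [PresentedGroup.toGroup.unique (lift_of_rels n) ((ψ n).comp (φ n)) h1,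
        PresentedGroup.toGroup.unique (lift_of_rels n) (MonoidHom.id (PG n)) (fun x => rfl)]
  exact MonoidHom.ext h2

lemma hφe (i : Fin 3) : φ n (ee n i) = gens n i := PresentedGroup.toGroup.of _

lemma hid2 : (φ n).comp (ψ n) = MonoidHom.id (TT n) := by
  apply MonoidHom.ext
  intro t
  show φ n (ψfun n t.toAdd) = t
  conv_rhs => rw [← ofAdd_toAdd t]
  obtain ⟨x, y, z⟩ := t.toAdd
  unfold ψfun
  rw [map_mul, map_mul, map_pow, map_pow, map_pow, hφe, hφe, hφe]
  show gens n 0 ^ x.val * gens n 1 ^ y.val * gens n 2 ^ z.val = ofAdd (x, y, z)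
  unfold gens
  simp only [Matrix.cons_val_zero, Matrix.cons_val_one, Matrix.head_cons,
    Matrix.cons_val_two, Matrix.tail_cons, ← ofAdd_nsmul, ← ofAdd_add]
  congr 1
  simp [Prod.ext_iff, nsmul_eq_mul, ZMod.natCast_rightInverse x,
    ZMod.natCast_rightInverse y, ZMod.natCast_rightInverse z]

def theEquiv : PG n ≃* TT n := MonoidHom.toMulEquiv (φ n) (ψ n) (hid1 n) (hid2 n)

end Part1


open SimpleGraph Walk


section Part2
variable (n : ℕ) [hfn : Fact (3 ≤ n)]

private lemma hn3' : 3 ≤ n := hfn.out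
instance fact1lt' : Fact (1 < n) := ⟨by have := hn3' n; omega⟩
instance neZeroN' : NeZero n := ⟨by have := hn3' n; omega⟩

abbrev VV := ZMod 2 × ZMod 2 × ZMod n

def SS : Set (VV n) := {(1,0,0),(0,1,0),(0,0,1)}

abbrev Cay : SimpleGraph (VV n) := cayleyGraphAdd (VV n) (SS n)

lemma adj_step {g h : VV n} (s : VV n) (hs : s ∈ SS n) (hne : s ≠ 0) (heq : h = g + s) :
    (Cay n).Adj g h := by
  show (SimpleGraph.fromRel _).Adj g h
  rw [SimpleGraph.fromRel_adj]
  refine ⟨?_, Or.inl ⟨s, hs, heq⟩⟩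
  rintro rfl
  exact hne (by simpa [left_eq_add] using heq.symm)

-- generators
lemma aa_mem : ((1,0,0) : VV n) ∈ SS n := by simp [SS]
lemma bb_mem : ((0,1,0) : VV n) ∈ SS n := by simp [SS]
lemma vv_mem : ((0,0,1) : VV n) ∈ SS n := by simp [SS]
lemma aa_ne : ((1,0,0) : VV n) ≠ 0 := by simp [Prod.ext_iff]
lemma bb_ne : ((0,1,0) : VV n) ≠ 0 := by simp [Prod.ext_iff]
lemma vv_ne : ((0,0,1) : VV n) ≠ 0 := by simp [Prod.ext_iff]

lemma adjV (g : VV n) : (Cay n).Adj g (g + (0,0,1)) :=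
  adj_step n _ (vv_mem n) (vv_ne n) rfl

def upWalk (g : VV n) : (k : ℕ) → (Cay n).Walk g (g + (0, 0, (k : ZMod n)))
  | 0 => Walk.nil.copy rfl (by simp)
  | (k+1) => Walk.cons (adjV n g) ((upWalk (g + (0,0,1)) k).copy rfl (by
      push_cast
      simp [Prod.ext_iff]
      ring))

lemma upWalk_support (g : VV n) (k : ℕ) :
    (upWalk n g k).support = List.map (fun i : ℕ => g + (0, 0, (i : ZMod n))) (List.range (k+1)) := by
  induction k generalizing g with
  | zero =>
    rw [upWalk]
    rw [Walk.support_copy, Walk.support_nil, show List.range 1 = [0] from rfl]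
    simp
  | succ k ih =>
    rw [upWalk]
    rw [Walk.support_cons, Walk.support_copy, ih, List.range_succ_eq_map (n := k+1)]
    rw [List.map_cons, List.map_map]
    refine congrArg₂ _ ?_ ?_
    · simp [Prod.ext_iff]
    · apply List.map_congr_left
      intro i _
      simp only [Function.comp_apply, Prod.ext_iff, Nat.succ_eq_add_one]
      push_cast
      refine ⟨by simp, by simp, by simp; ring⟩

lemma upWalk_mem {g x : VV n} {k : ℕ} (hx : x ∈ (upWalk n g k).support) :
    ∃ i ≤ k, x = g + (0, 0, (i : ZMod n)) := by
  rw [upWalk_support] at hx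
  simp only [List.mem_map, List.mem_range, Nat.lt_succ_iff] at hx
  obtain ⟨i, hi, rfl⟩ := hx
  exact ⟨i, hi, rfl⟩

lemma upWalk_isPath (g : VV n) (k : ℕ) (hk : k < n) : (upWalk n g k).IsPath := by
  rw [Walk.isPath_def, upWalk_support]
  refine List.Nodup.map_on ?_ List.nodup_range
  intro i hi j hj hij
  simp only [List.mem_range, Nat.lt_succ_iff] at hi hj
  have : (i : ZMod n) = (j : ZMod n) := by
    have := congrArg (fun t => t.2.2) hij
    simpa using this
  have := congrArg ZMod.val this
  rwa [ZMod.val_cast_of_lt (by omega), ZMod.val_cast_of_lt (by omega)] at this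

end Part2

section Main
variable (n : ℕ) [hfn : Fact (3 ≤ n)]

-- ZMod n facts
lemma z1 : (1 : ZMod n) ≠ 0 := one_ne_zero
lemma z1' : (0 : ZMod n) ≠ 1 := (z1 n).symm
lemma z2 : (-1 : ZMod n) ≠ 0 := by
  simp only [ne_eq, neg_eq_zero]; exact one_ne_zero
lemma z2' : (0 : ZMod n) ≠ -1 := (z2 n).symm
lemma zm1 : ((n - 1 : ℕ) : ZMod n) = -1 := by
  have h1 : 1 ≤ n := by have := hn3' n; omega
  rw [Nat.cast_sub h1, ZMod.natCast_self]
  ring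
lemma zc0 {k : ℕ} (h0 : k ≠ 0) (h : k < n) : (k : ZMod n) ≠ 0 := by
  intro he
  have := congrArg ZMod.val he
  rw [ZMod.val_cast_of_lt h, ZMod.val_zero] at this
  exact h0 this
lemma zc1 {k : ℕ} (h1 : k ≠ 1) (h : k < n) : (k : ZMod n) ≠ 1 := by
  intro he
  have := congrArg ZMod.val he
  rw [ZMod.val_cast_of_lt h, ZMod.val_one] at this
  exact h1 this
lemma zcm1 {k : ℕ} (h2 : k ≠ n - 1) (h : k < n) : (k : ZMod n) ≠ -1 := by
  intro he
  rw [← zm1 n] at he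
  have := congrArg ZMod.val he
  rw [ZMod.val_cast_of_lt h, ZMod.val_cast_of_lt (by omega)] at this
  exact h2 this
lemma z3 : (1 : ZMod n) ≠ -1 := by
  have h3 := hn3' n
  have := zcm1 n (k := 1) (by omega) (by omega)
  simpa using this
lemma z3' : (-1 : ZMod n) ≠ 1 := (z3 n).symm
lemma h22 : (1 : ZMod 2) + 1 = 0 := by decide
lemma h22' : (1 : ZMod 2) ≠ 0 := by decide

def fA : Fin 3 → VV n
  | 0 => (0,0,0)
  | 1 => (1,1,1)
  | 2 => (0,0,-1)

def fB : Fin 3 → VV n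
  | 0 => (0,0,1)
  | 1 => (1,0,-1)
  | 2 => (0,1,0)

def f0 : Fin 3 ⊕ Fin 3 → VV n := Sum.elim (fA n) (fB n)

-- the nine walks
def W00 : (Cay n).Walk ((0,0,0) : VV n) ((0,0,1) : VV n) :=
  Walk.cons (adj_step n _ (vv_mem n) (vv_ne n) (by simp [Prod.ext_iff])) Walk.nil

def W01 : (Cay n).Walk ((0,0,0) : VV n) ((1,0,-1) : VV n) :=
  Walk.cons (adj_step n _ (aa_mem n) (aa_ne n) (by simp [Prod.ext_iff]))
    (Walk.cons (adj_step n (g := ((1,0,-1) : VV n)) (h := ((1,0,0) : VV n)) _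
      (vv_mem n) (vv_ne n) (by simp [Prod.ext_iff])).symm Walk.nil)

def W02 : (Cay n).Walk ((0,0,0) : VV n) ((0,1,0) : VV n) :=
  Walk.cons (adj_step n _ (bb_mem n) (bb_ne n) (by simp [Prod.ext_iff])) Walk.nil

def W10 : (Cay n).Walk ((1,1,1) : VV n) ((0,0,1) : VV n) :=
  Walk.cons (adj_step n (h := ((0,1,1) : VV n)) _ (aa_mem n) (aa_ne n)
      (by simp [Prod.ext_iff, h22]))
    (Walk.cons (adj_step n _ (bb_mem n) (bb_ne n) (by simp [Prod.ext_iff, h22])) Walk.nil)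

def W11 : (Cay n).Walk ((1,1,1) : VV n) ((1,0,-1) : VV n) :=
  Walk.cons (adj_step n (h := ((1,0,1) : VV n)) _ (bb_mem n) (bb_ne n)
      (by simp [Prod.ext_iff, h22]))
    ((upWalk n ((1,0,1) : VV n) (n-2)).copy rfl (by
      have h1 : 2 ≤ n := by have := hn3' n; omega
      simp only [Prod.ext_iff]
      refine ⟨rfl, rfl, ?_⟩
      show (1 : ZMod n) + ((n - 2 : ℕ) : ZMod n) = -1
      rw [Nat.cast_sub h1, ZMod.natCast_self]
      push_cast
      ring))

def W12 : (Cay n).Walk ((1,1,1) : VV n) ((0,1,0) : VV n) :=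
  Walk.cons (adj_step n (g := ((1,1,0) : VV n)) (h := ((1,1,1) : VV n)) _
      (vv_mem n) (vv_ne n) (by simp [Prod.ext_iff])).symm
    (Walk.cons (adj_step n _ (aa_mem n) (aa_ne n) (by simp [Prod.ext_iff, h22])) Walk.nil)

def upW20 : (Cay n).Walk ((0,0,1) : VV n) ((0,0,-1) : VV n) :=
  (upWalk n ((0,0,1) : VV n) (n-2)).copy rfl (by
      have h1 : 2 ≤ n := by have := hn3' n; omega
      simp only [Prod.ext_iff]
      refine ⟨rfl, rfl, ?_⟩
      show (1 : ZMod n) + ((n - 2 : ℕ) : ZMod n) = -1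
      rw [Nat.cast_sub h1, ZMod.natCast_self]
      push_cast
      ring)

def W20 : (Cay n).Walk ((0,0,-1) : VV n) ((0,0,1) : VV n) := (upW20 n).reverse

def W21 : (Cay n).Walk ((0,0,-1) : VV n) ((1,0,-1) : VV n) :=
  Walk.cons (adj_step n _ (aa_mem n) (aa_ne n) (by simp [Prod.ext_iff])) Walk.nil

def W22 : (Cay n).Walk ((0,0,-1) : VV n) ((0,1,0) : VV n) :=
  Walk.cons (adj_step n (h := ((0,1,-1) : VV n)) _ (bb_mem n) (bb_ne n)
      (by simp [Prod.ext_iff]))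
    (Walk.cons (adj_step n _ (vv_mem n) (vv_ne n) (by simp [Prod.ext_iff])) Walk.nil)

def PW : (i j : Fin 3) → (Cay n).Walk (fA n i) (fB n j)
  | 0, 0 => W00 n
  | 0, 1 => W01 n
  | 0, 2 => W02 n
  | 1, 0 => W10 n
  | 1, 1 => W11 n
  | 1, 2 => W12 n
  | 2, 0 => W20 n
  | 2, 1 => W21 n
  | 2, 2 => W22 n

end Main

section Main2
variable (n : ℕ) [hfn : Fact (3 ≤ n)]

def II : Fin 3 → Fin 3 → Set (VV n)
  | 0, 1 => {x | x.1 = 1 ∧ x.2.1 = 0 ∧ x.2.2 = 0}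
  | 1, 0 => {x | x.1 = 0 ∧ x.2.1 = 1 ∧ x.2.2 = 1}
  | 1, 1 => {x | x.1 = 1 ∧ x.2.1 = 0 ∧ x.2.2 ≠ 0 ∧ x.2.2 ≠ -1}
  | 1, 2 => {x | x.1 = 1 ∧ x.2.1 = 1 ∧ x.2.2 = 0}
  | 2, 0 => {x | x.1 = 0 ∧ x.2.1 = 0 ∧ x.2.2 ≠ 0 ∧ x.2.2 ≠ 1 ∧ x.2.2 ≠ -1}
  | 2, 2 => {x | x.1 = 0 ∧ x.2.1 = 1 ∧ x.2.2 = -1}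
  | _, _ => ∅

lemma upW20_mem {x : VV n} (hx : x ∈ (upW20 n).support) :
    ∃ i ≤ n - 2, x = (0, 0, 1 + (i : ZMod n)) := by
  rw [upW20, Walk.support_copy] at hx
  obtain ⟨i, hi, rfl⟩ := upWalk_mem n hx
  exact ⟨i, hi, by simp [Prod.ext_iff]⟩

lemma classify (i j : Fin 3) (x : VV n) (hx : x ∈ (PW n i j).support) :
    x = fA n i ∨ x = fB n j ∨ x ∈ II n i j := by
  have h3 := hn3' n
  fin_cases i <;> fin_cases j
  · -- 0 0
    change x ∈ (W00 n).support at hx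
    simp only [PW, W00, Walk.support_cons, Walk.support_nil, List.mem_cons,
      List.mem_singleton, List.not_mem_nil, or_false] at hx
    rcases hx with rfl | rfl
    · exact Or.inl rfl
    · exact Or.inr (Or.inl rfl)
  · -- 0 1
    change x ∈ (W01 n).support at hx
    simp only [PW, W01, Walk.support_cons, Walk.support_nil, List.mem_cons,
      List.mem_singleton, List.not_mem_nil, or_false] at hx
    rcases hx with rfl | rfl | rfl
    · exact Or.inl rfl
    · exact Or.inr (Or.inr ⟨rfl, rfl, rfl⟩)
    · exact Or.inr (Or.inl rfl)
  · -- 0 2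
    change x ∈ (W02 n).support at hx
    simp only [PW, W02, Walk.support_cons, Walk.support_nil, List.mem_cons,
      List.mem_singleton, List.not_mem_nil, or_false] at hx
    rcases hx with rfl | rfl
    · exact Or.inl rfl
    · exact Or.inr (Or.inl rfl)
  · -- 1 0
    change x ∈ (W10 n).support at hx
    simp only [PW, W10, Walk.support_cons, Walk.support_nil, List.mem_cons,
      List.mem_singleton, List.not_mem_nil, or_false] at hx
    rcases hx with rfl | rfl | rfl
    · exact Or.inl rfl
    · exact Or.inr (Or.inr ⟨rfl, rfl, rfl⟩)
    · exact Or.inr (Or.inl rfl)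
  · -- 1 1
    change x ∈ (W11 n).support at hx
    simp only [PW, W11, Walk.support_cons, Walk.support_copy, List.mem_cons] at hx
    rcases hx with rfl | hx
    · exact Or.inl rfl
    · obtain ⟨i, hi, rfl⟩ := upWalk_mem n hx
      by_cases hcase : i = n - 2
      · subst hcase
        refine Or.inr (Or.inl ?_)
        show _ = ((1 : ZMod 2), (0 : ZMod 2), (-1 : ZMod n))
        refine Prod.ext rfl (Prod.ext rfl ?_)
        show (1 : ZMod n) + ((n - 2 : ℕ) : ZMod n) = -1
        rw [Nat.cast_sub (by omega), ZMod.natCast_self]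
        push_cast; ring
      · refine Or.inr (Or.inr ?_)
        have key : ((1 : ZMod n) + (i : ZMod n)) = ((i + 1 : ℕ) : ZMod n) := by
          push_cast; ring
        refine ⟨rfl, rfl, ?_, ?_⟩
        · show (1 : ZMod n) + (i : ZMod n) ≠ 0
          rw [key]; exact zc0 n (by omega) (by omega)
        · show (1 : ZMod n) + (i : ZMod n) ≠ -1
          rw [key]; exact zcm1 n (by omega) (by omega)
  · -- 1 2
    change x ∈ (W12 n).support at hx
    simp only [PW, W12, Walk.support_cons, Walk.support_nil, List.mem_cons,
      List.mem_singleton, List.not_mem_nil, or_false] at hx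
    rcases hx with rfl | rfl | rfl
    · exact Or.inl rfl
    · exact Or.inr (Or.inr ⟨rfl, rfl, rfl⟩)
    · exact Or.inr (Or.inl rfl)
  · -- 2 0
    change x ∈ (W20 n).support at hx
    simp only [PW, W20, Walk.support_reverse, List.mem_reverse] at hx
    obtain ⟨i, hi, rfl⟩ := upW20_mem n hx
    have key : ((1 : ZMod n) + (i : ZMod n)) = ((i + 1 : ℕ) : ZMod n) := by
      push_cast; ring
    by_cases hc0 : i = 0
    · subst hc0
      refine Or.inr (Or.inl ?_)
      simp [fB, Prod.ext_iff]
    by_cases hcase : i = n - 2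
    · subst hcase
      refine Or.inl ?_
      show _ = ((0 : ZMod 2), (0 : ZMod 2), (-1 : ZMod n))
      refine Prod.ext rfl (Prod.ext rfl ?_)
      show (1 : ZMod n) + ((n - 2 : ℕ) : ZMod n) = -1
      rw [Nat.cast_sub (by omega), ZMod.natCast_self]
      push_cast; ring
    · refine Or.inr (Or.inr ?_)
      refine ⟨rfl, rfl, ?_, ?_, ?_⟩
      · show (1 : ZMod n) + (i : ZMod n) ≠ 0
        rw [key]; exact zc0 n (by omega) (by omega)
      · show (1 : ZMod n) + (i : ZMod n) ≠ 1
        rw [key]; exact zc1 n (by omega) (by omega)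
      · show (1 : ZMod n) + (i : ZMod n) ≠ -1
        rw [key]; exact zcm1 n (by omega) (by omega)
  · -- 2 1
    change x ∈ (W21 n).support at hx
    simp only [PW, W21, Walk.support_cons, Walk.support_nil, List.mem_cons,
      List.mem_singleton, List.not_mem_nil, or_false] at hx
    rcases hx with rfl | rfl
    · exact Or.inl rfl
    · exact Or.inr (Or.inl rfl)
  · -- 2 2
    change x ∈ (W22 n).support at hx
    simp only [PW, W22, Walk.support_cons, Walk.support_nil, List.mem_cons,
      List.mem_singleton, List.not_mem_nil, or_false] at hx
    rcases hx with rfl | rfl | rfl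
    · exact Or.inl rfl
    · exact Or.inr (Or.inr ⟨rfl, rfl, rfl⟩)
    · exact Or.inr (Or.inl rfl)

end Main2

section Main3
variable (n : ℕ) [hfn : Fact (3 ≤ n)]

lemma disjII : ∀ (i j i' j' : Fin 3), ¬(i = i' ∧ j = j') →
    ∀ x : VV n, x ∈ II n i j → x ∈ II n i' j' → False := by
  have e1 : (1 : ZMod 2) ≠ 0 := by decide
  have e2 : (1 : ZMod n) ≠ -1 := z3 n
  have e3 : (1 : ZMod n) ≠ 0 := z1 n
  have e4 : (-1 : ZMod n) ≠ 0 := z2 n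
  intro i j i' j' hne x h1 h2
  fin_cases i <;> fin_cases j <;> fin_cases i' <;> fin_cases j' <;>
    simp_all [II] <;> simp_all [Prod.ext_iff]

lemma branchNotII : ∀ (w : Fin 3 ⊕ Fin 3) (i j : Fin 3), f0 n w ∈ II n i j → False := by
  have e1 : (1 : ZMod 2) ≠ 0 := by decide
  have e2 : (1 : ZMod n) ≠ -1 := z3 n
  have e3 : (1 : ZMod n) ≠ 0 := z1 n
  have e4 : (-1 : ZMod n) ≠ 0 := z2 n
  rintro (w | w) i j h <;>
    fin_cases w <;> fin_cases i <;> fin_cases j <;>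
      simp_all [II, f0, fA, fB]

lemma PW_isPath (i j : Fin 3) : (PW n i j).IsPath := by
  have h3 := hn3' n
  have e1 : (1 : ZMod 2) ≠ 0 := by decide
  have e1' : (0 : ZMod 2) ≠ 1 := by decide
  have upw : ∀ g : VV n, (upWalk n g (n-2)).IsPath :=
    fun g => upWalk_isPath n g _ (by omega)
  have nm : ∀ g : VV n, g.2.1 = 1 → ∀ base : VV n, base.2.1 = 0 →
      g ∉ (upWalk n base (n-2)).support := by
    intro g hg base hb hmem
    obtain ⟨i, _, heq⟩ := upWalk_mem n hmem
    rw [heq, Prod.snd_add, Prod.fst_add, hb] at hg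
    simp at hg
  fin_cases i <;> fin_cases j
  · simp [PW, W00, fA, fB, Walk.isPath_def, Prod.ext_iff, z1' n]
  · simp [PW, W01, fA, fB, Walk.isPath_def, Prod.ext_iff, z2' n, e1', e1]
  · simp [PW, W02, fA, fB, Walk.isPath_def, Prod.ext_iff, e1']
  · simp [PW, W10, fA, fB, Walk.isPath_def, Prod.ext_iff, e1', e1]
  · -- 1 1
    show (W11 n).IsPath
    rw [W11, Walk.cons_isPath_iff]
    refine ⟨(Walk.isPath_copy _ rfl _).mpr (upw _), ?_⟩
    rw [Walk.support_copy]
    exact nm ((1:ZMod 2),(1:ZMod 2),(1:ZMod n)) rfl _ rfl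
  · simp [PW, W12, fA, fB, Walk.isPath_def, Prod.ext_iff, e1', e1, z1 n]
  · -- 2 0
    show (W20 n).IsPath
    refine Walk.IsPath.reverse ?_
    rw [upW20, Walk.isPath_copy]
    exact upw _
  · simp [PW, W21, fA, fB, Walk.isPath_def, Prod.ext_iff, e1']
  · simp [PW, W22, fA, fB, Walk.isPath_def, Prod.ext_iff, e1', z2 n]

lemma f0_inj : Function.Injective (f0 n) := by
  intro a b h
  rcases a with ai | ai <;> rcases b with bi | bi <;> fin_cases ai <;> fin_cases bi <;>
    first
      | rfl
      | (exfalso; revert h;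
         simp [f0, fA, fB, Prod.ext_iff, z1 n, z1' n, z2 n, z2' n, z3 n, z3' n])

def p' : ∀ {a b : Fin 3 ⊕ Fin 3}, (completeBipartiteGraph (Fin 3) (Fin 3)).Adj a b →
    (Cay n).Walk (f0 n a) (f0 n b)
  | .inl i, .inr j, _ => PW n i j
  | .inr j, .inl i, _ => (PW n i j).reverse
  | .inl _, .inl _, h => absurd h (by simp)
  | .inr _, .inr _, h => absurd h (by simp)

lemma key : ∀ (i j i' j' : Fin 3), ¬(i = i' ∧ j = j') →
    ∀ x : VV n, x ∈ (PW n i j).support → x ∈ (PW n i' j').support →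
      ∃ w, x = f0 n w := by
  intro i j i' j' hne x h1 h2
  rcases classify n i j x h1 with rfl | rfl | hI1
  · exact ⟨Sum.inl i, rfl⟩
  · exact ⟨Sum.inr j, rfl⟩
  rcases classify n i' j' x h2 with rfl | rfl | hI2
  · exact ⟨Sum.inl i', rfl⟩
  · exact ⟨Sum.inr j', rfl⟩
  · exact absurd hI2 (fun h => disjII n i j i' j' hne x hI1 h)

end Main3


section Main4
variable (n : ℕ) [hfn : Fact (3 ≤ n)]

lemma cond_isPath : ∀ {a b : Fin 3 ⊕ Fin 3} (h : (completeBipartiteGraph (Fin 3) (Fin 3)).Adj a b),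
    (p' n h).IsPath := by
  rintro (i | i) (j | j) h
  · simp at h
  · exact PW_isPath n i j
  · exact (PW_isPath n j i).reverse
  · simp at h

lemma cond_symm : ∀ {a b : Fin 3 ⊕ Fin 3} (h : (completeBipartiteGraph (Fin 3) (Fin 3)).Adj a b),
    p' n h.symm = (p' n h).reverse := by
  rintro (i | i) (j | j) h
  · simp at h
  · rfl
  · exact (Walk.reverse_reverse _).symm
  · simp at h

lemma cond_branch : ∀ {a b : Fin 3 ⊕ Fin 3} (h : (completeBipartiteGraph (Fin 3) (Fin 3)).Adj a b)
    (c : Fin 3 ⊕ Fin 3), f0 n c ∈ (p' n h).support → c = a ∨ c = b := by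
  rintro (i | i) (j | j) h c hc
  · simp at h
  · rcases classify n i j _ hc with h1 | h1 | h1
    · exact Or.inl (f0_inj n (h1 : f0 n c = f0 n (Sum.inl i)))
    · exact Or.inr (f0_inj n (h1 : f0 n c = f0 n (Sum.inr j)))
    · exact absurd h1 (fun hh => branchNotII n c i j hh)
  · have hc' : f0 n c ∈ ((PW n j i).reverse).support := hc
    rw [Walk.support_reverse, List.mem_reverse] at hc'
    rcases classify n j i _ hc' with h1 | h1 | h1
    · exact Or.inr (f0_inj n (h1 : f0 n c = f0 n (Sum.inl j)))
    · exact Or.inl (f0_inj n (h1 : f0 n c = f0 n (Sum.inr i)))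
    · exact absurd h1 (fun hh => branchNotII n c j i hh)
  · simp at h

lemma noll (i j : Fin 3) : ¬ (completeBipartiteGraph (Fin 3) (Fin 3)).Adj (.inl i) (.inl j) := by
  simp

lemma norr (i j : Fin 3) : ¬ (completeBipartiteGraph (Fin 3) (Fin 3)).Adj (.inr i) (.inr j) := by
  simp

lemma cond_disj : ∀ {a b c d : Fin 3 ⊕ Fin 3} (h₁ : (completeBipartiteGraph (Fin 3) (Fin 3)).Adj a b)
    (h₂ : (completeBipartiteGraph (Fin 3) (Fin 3)).Adj c d), s(a, b) ≠ s(c, d) →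
    ∀ x, x ∈ (p' n h₁).support → x ∈ (p' n h₂).support → ∃ w, x = f0 n w := by
  rintro (i | i) (j | j) (i' | i') (j' | j') h₁ h₂ hne x hx1 hx2 <;>
    first
      | exact absurd h₁ (noll _ _)
      | exact absurd h₁ (norr _ _)
      | exact absurd h₂ (noll _ _)
      | exact absurd h₂ (norr _ _)
      | skip
  · -- inl i, inr j vs inl i', inr j'
    refine key n i j i' j' ?_ x hx1 hx2
    rintro ⟨rfl, rfl⟩; exact hne rfl
  · -- inl i, inr j vs inr i', inl j'
    have hx2' : x ∈ (PW n j' i').support := by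
      have : x ∈ ((PW n j' i').reverse).support := hx2
      rwa [Walk.support_reverse, List.mem_reverse] at this
    refine key n i j j' i' ?_ x hx1 hx2'
    rintro ⟨rfl, rfl⟩; exact hne (Sym2.eq_swap)
  · -- inr i, inl j vs inl i', inr j'
    have hx1' : x ∈ (PW n j i).support := by
      have : x ∈ ((PW n j i).reverse).support := hx1
      rwa [Walk.support_reverse, List.mem_reverse] at this
    refine key n j i i' j' ?_ x hx1' hx2
    rintro ⟨rfl, rfl⟩; exact hne (Sym2.eq_swap)
  · -- inr inl vs inr inl
    have hx1' : x ∈ (PW n j i).support := by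
      have : x ∈ ((PW n j i).reverse).support := hx1
      rwa [Walk.support_reverse, List.mem_reverse] at this
    have hx2' : x ∈ (PW n j' i').support := by
      have : x ∈ ((PW n j' i').reverse).support := hx2
      rwa [Walk.support_reverse, List.mem_reverse] at this
    refine key n j i j' i' ?_ x hx1' hx2'
    rintro ⟨rfl, rfl⟩; exact hne rfl

lemma cond_range : Set.range (f0 n) =
    ({((0:ZMod 2),(0:ZMod 2),(0:ZMod n)), (0,0,1), (1,0,-1), (0,1,0), (1,1,1), (0,0,-1)} :
      Set (VV n)) := by
  ext x
  constructor
  · rintro ⟨(w | w), rfl⟩ <;> fin_cases w <;> simp [f0, fA, fB]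
  · intro hx
    rcases hx with rfl | rfl | rfl | rfl | rfl | rfl
    · exact ⟨Sum.inl 0, rfl⟩
    · exact ⟨Sum.inr 0, rfl⟩
    · exact ⟨Sum.inr 1, rfl⟩
    · exact ⟨Sum.inr 2, rfl⟩
    · exact ⟨Sum.inl 1, rfl⟩
    · exact ⟨Sum.inl 2, rfl⟩

lemma subdivOn : ContainsSubdivisionOn (Cay n) (completeBipartiteGraph (Fin 3) (Fin 3))
    ({((0:ZMod 2),(0:ZMod 2),(0:ZMod n)), (0,0,1), (1,0,-1), (0,1,0), (1,1,1), (0,0,-1)} :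
      Set (VV n)) :=
  ⟨⟨f0 n, f0_inj n⟩, fun {a b} h => p' n h, cond_range n, cond_isPath n, cond_symm n,
    cond_branch n, cond_disj n⟩

lemma subdiv : ContainsSubdivision (Cay n) (completeBipartiteGraph (Fin 3) (Fin 3)) :=
  ⟨⟨f0 n, f0_inj n⟩, fun {a b} h => p' n h, cond_isPath n, cond_symm n,
    cond_branch n, cond_disj n⟩

end Main4

/-- For the triangle graph product graph with vertex groups `⟨a⟩, ⟨b⟩, ⟨v⟩` of orders
`2, 2, n` (`n ≥ 3`): `G(Γ) ≅ ℤ/2 × ℤ/2 × ℤ/n`, and the Cayley graph of this group with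
respect to `{a, b, v} = {(1,0,0), (0,1,0), (0,0,1)}` contains a subdivision of `K₃,₃` with
branch vertices `1, v, a·vⁿ⁻¹, b, a·b·v, vⁿ⁻¹`; hence it is non-planar. -/
theorem stmt_19 (n : ℕ) (hn : 3 ≤ n) :
    Nonempty (GraphProduct (SimpleGraph.completeGraph (Fin 3)) ![2, 2, n] ≃*
      Multiplicative (ZMod 2 × ZMod 2 × ZMod n)) ∧
    ContainsSubdivisionOn
      (cayleyGraphAdd (ZMod 2 × ZMod 2 × ZMod n) {(1, 0, 0), (0, 1, 0), (0, 0, 1)})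
      (completeBipartiteGraph (Fin 3) (Fin 3))
      ({(0, 0, 0), (0, 0, 1), (1, 0, -1), (0, 1, 0), (1, 1, 1), (0, 0, -1)} :
        Set (ZMod 2 × ZMod 2 × ZMod n)) ∧
    ¬ IsPlanar
      (cayleyGraphAdd (ZMod 2 × ZMod 2 × ZMod n) {(1, 0, 0), (0, 1, 0), (0, 0, 1)}) := by
  haveI : Fact (3 ≤ n) := ⟨hn⟩
  refine ⟨⟨theEquiv n⟩, subdivOn n, ?_⟩
  intro h
  exact h.2 (subdiv n)
end
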